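/- arXiv:1402.6199 — 7 statements merged into one kernel-verified Lean document; each statement's English description precedes it below -/
import Mathlib

section
/- Let α = {α_n} be any sequence of complex numbers and let H_{φ,ψ}^α be the operator with domain D = {f ∈ H : Σ_n α_n ⟨f, ψ_n⟩ φ_n converges in H} defined by H_{φ,ψ}^α f = Σ_n α_n ⟨f, ψ_n⟩ φ_n. Then D = {f ∈ H : Σ_n |α_n|^2 |⟨f, ψ_n⟩|^2 < ∞}. -/
noncomputable section

open ContinuousLinearMap

local notation "⟪" x ", " y "⟫" => @inner ℂ _ _ x y

theorem domain_characterization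
    {H : Type*} [NormedAddCommGroup H] [InnerProductSpace ℂ H] [CompleteSpace H]
    (e : HilbertBasis ℕ ℂ H) (T : H ≃L[ℂ] H) (φ ψ : ℕ → H)
    (hφ : ∀ n, φ n = T (e n))
    (hψ : ∀ n, ψ n = adjoint (T.symm : H →L[ℂ] H) (e n)) (α : ℕ → ℂ) :
    ∀ f : H,
      (∃ g, HasSum (fun n => (α n * ⟪ψ n, f⟫) • φ n) g) ↔
        Summable (fun n => ‖α n‖ ^ 2 * ‖⟪ψ n, f⟫‖ ^ 2) := by
  intro f
  set c : ℕ → ℂ := fun n => α n * ⟪ψ n, f⟫ with hc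
  have key : (∃ g, HasSum (fun n => c n • φ n) g) ↔ Summable fun n => ‖c n‖ ^ 2 := by
    constructor
    · rintro ⟨g, hg⟩
      have hg' : HasSum (fun n => c n • (e n : H)) (T.symm g) := by
        have := (T.symm : H →L[ℂ] H).hasSum hg
        simpa [hφ, map_smul] using this
      have hsum : Summable fun n =>
          (LinearIsometry.toSpanSingleton ℂ H (e.orthonormal.1 n)) (c n) := by
        simpa [LinearIsometry.toSpanSingleton] using hg'.summable
      exact (e.orthonormal.orthogonalFamily.summable_iff_norm_sq_summable c).mp
        (by simpa using hsum)
    · intro hs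
      have hsum : Summable fun n => c n • (e n : H) := by
        have := (e.orthonormal.orthogonalFamily.summable_iff_norm_sq_summable c).mpr
          (by simpa using hs)
        simpa [LinearIsometry.toSpanSingleton] using this
      obtain ⟨a, ha⟩ := hsum
      refine ⟨T a, ?_⟩
      have := (T : H →L[ℂ] H).hasSum ha
      simpa [hφ, map_smul] using this
  rw [key]
  apply summable_congr
  intro n
  simp [hc, mul_pow]
end
end

section
/- The operator H_{φ,ψ}^α defined by H_{φ,ψ}^α f = Σ_n α_n ⟨f, ψ_n⟩ φ_n on its natural domain D(H_{φ,ψ}^α) = {f : Σ_n |α_n|^2 |⟨f, ψ_n⟩|^2 < ∞} is a closed operator. -/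
/-! Pulling the series back through `T⁻¹` turns `H f = g` into `∑ₙ αₙ ⟪ψₙ, f⟫ eₙ = T⁻¹ g`, and a
series along a Hilbert basis converges to `x` exactly when its coefficients are those of `x`.
The graph is therefore the intersection over `n` of the closed sets
`{(f, g) | ⟪eₙ, T⁻¹ g⟫ = αₙ ⟪ψₙ, f⟫}`. -/

noncomputable section

open ContinuousLinearMap

local notation "⟪" x ", " y "⟫" => @inner ℂ _ _ x y

section HilbertBasis

variable {ι 𝕜 E : Type*} [RCLike 𝕜] [NormedAddCommGroup E] [InnerProductSpace 𝕜 E]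

theorem Orthonormal.inner_left_eq_of_hasSum {v : ι → E} (hv : Orthonormal 𝕜 v) {c : ι → 𝕜}
    {x : E} (h : HasSum (fun j => c j • v j) x) (i : ι) : inner 𝕜 (v i) x = c i := by
  have hi := h.mapL (innerSL 𝕜 (v i))
  simp only [innerSL_apply_apply, inner_smul_right] at hi
  refine hi.unique ?_
  convert hasSum_single (f := fun j => c j * inner 𝕜 (v i) (v j)) i fun j hj => ?_ using 1
  · simp [hv.1 i]
  · simp [hv.inner_eq_zero hj.symm]

theorem HilbertBasis.hasSum_smul_iff (b : HilbertBasis ι 𝕜 E) {c : ι → 𝕜} {x : E} :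
    HasSum (fun i => c i • b i) x ↔ ∀ i, inner 𝕜 (b i) x = c i := by
  refine ⟨b.orthonormal.inner_left_eq_of_hasSum, fun h => ?_⟩
  simpa only [b.repr_apply_apply, h] using b.hasSum_repr x

theorem HilbertBasis.isClosed_setOf_hasSum_smul {X : Type*} [TopologicalSpace X]
    (b : HilbertBasis ι 𝕜 E) {c : ι → X → 𝕜} (hc : ∀ i, Continuous (c i)) {f : X → E}
    (hf : Continuous f) : IsClosed {x | HasSum (fun i => c i x • b i) (f x)} := by
  simp only [b.hasSum_smul_iff, Set.ofPred_forall]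
  exact isClosed_iInter fun i => isClosed_eq (continuous_const.inner hf) (hc i)

end HilbertBasis

theorem operator_closed_general
    {H : Type*} [NormedAddCommGroup H] [InnerProductSpace ℂ H]
    (e : HilbertBasis ℕ ℂ H) (T : H ≃L[ℂ] H) (φ ψ : ℕ → H)
    (hφ : ∀ n, φ n = T (e n))
    (α : ℕ → ℂ) :
    IsClosed {p : H × H | HasSum (fun n => (α n * ⟪ψ n, p.1⟫) • φ n) p.2} := by
  have hgraph : {p : H × H | HasSum (fun n => (α n * ⟪ψ n, p.1⟫) • φ n) p.2}
      = {p : H × H | HasSum (fun n => (α n * ⟪ψ n, p.1⟫) • e n) (T.symm p.2)} := by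
    ext p
    simp only [Set.mem_ofPred_eq, hφ, ← map_smul, T.hasSum]
  rw [hgraph]
  exact e.isClosed_setOf_hasSum_smul
    (fun n => continuous_const.mul (continuous_const.inner continuous_fst))
    (T.symm.continuous.comp continuous_snd)

theorem operator_closed
    {H : Type*} [NormedAddCommGroup H] [InnerProductSpace ℂ H] [CompleteSpace H]
    (e : HilbertBasis ℕ ℂ H) (T : H ≃L[ℂ] H) (φ ψ : ℕ → H)
    (hφ : ∀ n, φ n = T (e n))
    (hψ : ∀ n, ψ n = adjoint (T.symm : H →L[ℂ] H) (e n)) (α : ℕ → ℂ) :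
    IsClosed {p : H × H | HasSum (fun n => (α n * ⟪ψ n, p.1⟫) • φ n) p.2} :=
  operator_closed_general e T φ ψ hφ α
end
end

section
/- The adjoint of H_{φ,ψ}^α equals H_{ψ,φ}^{ᾱ}, where H_{ψ,φ}^{ᾱ} f = Σ_n \overline{α_n} ⟨f, φ_n⟩ ψ_n on the domain {f : Σ_n |α_n|^2 |⟨f, φ_n⟩|^2 < ∞}. -/
/-!
If `⟨ψ n, φ m⟩ = δ_{nm}`, testing the adjoint relation `⟨g, H f⟩ = ⟨h, f⟩` on `f = φ m` forces the
`ψ`-coefficients of `h` to be `conj (α m) ⟨φ m, g⟩`, and `h` is recovered from these coefficients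
because every vector expands as `∑ ⟨φ n, h⟩ ψ n`. Conversely, if the `ψ`-series of `g` sums to `h`,
both sides of the adjoint relation are the same series `∑ α n ⟨ψ n, f⟩ ⟨g, φ n⟩`.
For `φ n = T (e n)` and `ψ n = (T⁻¹)* (e n)` both properties come from the orthonormal basis `e`.
-/

noncomputable section

open ContinuousLinearMap

local notation "⟪" x ", " y "⟫" => @inner ℂ _ _ x y

open scoped ComplexConjugate

section Multiplier

variable {𝕜 E ι : Type*} [RCLike 𝕜] [NormedAddCommGroup E] [InnerProductSpace 𝕜 E]

/-- The terms of `H_{φ,ψ}^α f`; the paper's `⟨f, ψ n⟩` is `inner 𝕜 (ψ n) f`, since Mathlib's inner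
product is conjugate-linear in its first argument. -/
def multiplierSeries (α : ι → 𝕜) (φ ψ : ι → E) (f : E) : ι → E :=
  fun n => (α n * inner 𝕜 (ψ n) f) • φ n

theorem inner_eq_inner_of_hasSum_multiplierSeries {α : ι → 𝕜} {φ ψ : ι → E} {f g h k : E}
    (hk : HasSum (multiplierSeries α φ ψ f) k)
    (hh : HasSum (multiplierSeries (fun n => conj (α n)) ψ φ g) h) :
    inner 𝕜 g k = inner 𝕜 h f := by
  have hgk := hk.mapL (innerSL 𝕜 g)
  have hhf := (RCLike.hasSum_conj' (𝕜 := 𝕜)).mpr (hh.mapL (innerSL 𝕜 f))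
  simp only [multiplierSeries, innerSL_apply_apply, inner_smul_right, inner_conj_symm,
    map_mul, RCLike.conj_conj] at hgk hhf
  exact hgk.unique (hhf.congr_fun fun n => by ring)

theorem hasSum_multiplierSeries_of_biorthogonal [DecidableEq ι] {φ ψ : ι → E}
    (hbi : ∀ n m, inner 𝕜 (ψ n) (φ m) = if n = m then 1 else 0) (α : ι → 𝕜) (m : ι) :
    HasSum (multiplierSeries α φ ψ (φ m)) (α m • φ m) := by
  convert hasSum_single m fun n hnm => ?_ using 1
  · simp [multiplierSeries, hbi]
  · simp [multiplierSeries, hbi, hnm]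

theorem forall_inner_eq_iff_hasSum_multiplierSeries [DecidableEq ι] {φ ψ : ι → E}
    (hbi : ∀ n m, inner 𝕜 (ψ n) (φ m) = if n = m then 1 else 0)
    (hexp : ∀ h, HasSum (fun n => inner 𝕜 (φ n) h • ψ n) h) (α : ι → 𝕜) (g h : E) :
    (∀ f k, HasSum (multiplierSeries α φ ψ f) k → inner 𝕜 g k = inner 𝕜 h f) ↔
      HasSum (multiplierSeries (fun n => conj (α n)) ψ φ g) h := by
  refine ⟨fun hadj => (hexp h).congr_fun fun m => ?_,
    fun hh f k hk => inner_eq_inner_of_hasSum_multiplierSeries hk hh⟩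
  have := congrArg conj (hadj _ _ (hasSum_multiplierSeries_of_biorthogonal hbi α m))
  simp only [inner_smul_right, map_mul, inner_conj_symm] at this
  simp only [multiplierSeries, this]

end Multiplier

section RieszBasis

variable {𝕜 E ι : Type*} [RCLike 𝕜] [NormedAddCommGroup E] [InnerProductSpace 𝕜 E]
  [CompleteSpace E]

theorem inner_adjoint_symm_apply_apply (T : E ≃L[𝕜] E) (x y : E) :
    inner 𝕜 (adjoint (T.symm : E →L[𝕜] E) x) (T y) = inner 𝕜 x y := by
  rw [adjoint_inner_left, ContinuousLinearEquiv.coe_coe, T.symm_apply_apply]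

theorem hasSum_inner_apply_smul_adjoint_symm (e : HilbertBasis ι 𝕜 E) (T : E ≃L[𝕜] E) (x : E) :
    HasSum (fun n => inner 𝕜 (T (e n)) x • adjoint (T.symm : E →L[𝕜] E) (e n)) x := by
  have hx : adjoint (T.symm : E →L[𝕜] E) (adjoint (T : E →L[𝕜] E) x) = x := by
    rw [← comp_apply, ← adjoint_comp, T.coe_comp_coe_symm, adjoint_id, id_apply]
  have := (e.hasSum_repr (adjoint (T : E →L[𝕜] E) x)).mapL (adjoint (T.symm : E →L[𝕜] E))
  simpa [hx, e.repr_apply_apply, adjoint_inner_right] using this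

end RieszBasis

theorem adjoint_of_H
    {H : Type*} [NormedAddCommGroup H] [InnerProductSpace ℂ H] [CompleteSpace H]
    (e : HilbertBasis ℕ ℂ H) (T : H ≃L[ℂ] H) (φ ψ : ℕ → H)
    (hφ : ∀ n, φ n = T (e n))
    (hψ : ∀ n, ψ n = adjoint (T.symm : H →L[ℂ] H) (e n)) (α : ℕ → ℂ) :
    ∀ g h : H,
      (∀ f k : H, HasSum (fun n => (α n * ⟪ψ n, f⟫) • φ n) k → ⟪g, k⟫ = ⟪h, f⟫) ↔
        HasSum (fun n => ((starRingEnd ℂ) (α n) * ⟪φ n, g⟫) • ψ n) h := by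
  obtain rfl : φ = fun n => T (e n) := funext hφ
  obtain rfl : ψ = fun n => adjoint (T.symm : H →L[ℂ] H) (e n) := funext hψ
  refine forall_inner_eq_iff_hasSum_multiplierSeries (fun n m => ?_)
    (hasSum_inner_apply_smul_adjoint_symm e T) α
  rw [inner_adjoint_symm_apply_apply]
  exact orthonormal_iff_ite.mp e.orthonormal n m
end
end

section
/- For a real sequence β = {β_n}, the operator S_ψ^β f = Σ_n β_n ⟨f, ψ_n⟩ ψ_n, defined on {f : Σ_n |β_n|^2 |⟨f, ψ_n⟩|^2 < ∞}, is self-adjoint; if moreover all β_n ≥ 0 it is positive self-adjoint. -/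
noncomputable section

open ContinuousLinearMap

local notation "⟪" x ", " y "⟫" => @inner ℂ _ _ x y

theorem S_psi_beta_selfadjoint
    {H : Type*} [NormedAddCommGroup H] [InnerProductSpace ℂ H] [CompleteSpace H]
    (e : HilbertBasis ℕ ℂ H) (T : H ≃L[ℂ] H) (φ ψ : ℕ → H)
    (hφ : ∀ n, φ n = T (e n))
    (hψ : ∀ n, ψ n = adjoint (T.symm : H →L[ℂ] H) (e n)) (β : ℕ → ℝ) :
    (∀ g h : H,
      (∀ f k : H, HasSum (fun n => ((β n : ℂ) * ⟪ψ n, f⟫) • ψ n) k → ⟪g, k⟫ = ⟪h, f⟫) ↔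
        HasSum (fun n => ((β n : ℂ) * ⟪ψ n, g⟫) • ψ n) h) ∧
    ((∀ n, 0 ≤ β n) → ∀ f k : H,
      HasSum (fun n => ((β n : ℂ) * ⟪ψ n, f⟫) • ψ n) k →
        0 ≤ (⟪f, k⟫).re ∧ (⟪f, k⟫).im = 0) := by
  -- biorthogonality
  have hψφ : ∀ n m : ℕ, ⟪ψ n, φ m⟫ = if n = m then 1 else 0 := by
    intro n m
    rw [hψ, hφ, ContinuousLinearMap.adjoint_inner_left]
    simp only [ContinuousLinearEquiv.coe_coe, ContinuousLinearEquiv.symm_apply_apply]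
    exact orthonormal_iff_ite.mp e.orthonormal n m
  -- expansion of any vector in the Riesz basis ψ with coefficients ⟪φ n, ·⟫
  have hexp : ∀ h : H, HasSum (fun n => ⟪φ n, h⟫ • ψ n) h := by
    intro h
    have h1 : HasSum (fun n => ⟪e n, adjoint (T : H →L[ℂ] H) h⟫ • e n)
        (adjoint (T : H →L[ℂ] H) h) := by
      simpa [e.repr_apply_apply] using e.hasSum_repr (adjoint (T : H →L[ℂ] H) h)
    have h2 := h1.mapL (adjoint (T.symm : H →L[ℂ] H))
    have h3 : adjoint (T.symm : H →L[ℂ] H) (adjoint (T : H →L[ℂ] H) h) = h := by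
      apply ext_inner_left ℂ
      intro v
      rw [ContinuousLinearMap.adjoint_inner_right, ContinuousLinearMap.adjoint_inner_right]
      simp
    have h4 : ∀ n, ⟪e n, adjoint (T : H →L[ℂ] H) h⟫ = ⟪φ n, h⟫ := by
      intro n
      rw [ContinuousLinearMap.adjoint_inner_right, hφ]
      rfl
    rw [h3] at h2
    refine h2.congr_fun fun n => ?_
    rw [map_smul, hψ, h4]
  constructor
  · intro g h
    constructor
    · -- forward: test against f = φ m
      intro hyp
      have key : ∀ m, ⟪φ m, h⟫ = (β m : ℂ) * ⟪ψ m, g⟫ := by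
        intro m
        have hsum : HasSum (fun n => ((β n : ℂ) * ⟪ψ n, φ m⟫) • ψ n) ((β m : ℂ) • ψ m) := by
          refine (hasSum_ite_eq m ((β m : ℂ) • ψ m)).congr_fun fun n => ?_
          rw [hψφ]
          by_cases hnm : n = m
          · subst hnm; simp
          · simp [hnm]
        have := hyp (φ m) ((β m : ℂ) • ψ m) hsum
        rw [inner_smul_right] at this
        have := congrArg (starRingEnd ℂ) this
        simpa [inner_conj_symm, Complex.conj_ofReal] using this.symm
      refine (hexp h).congr_fun fun n => ?_
      rw [key]
    · -- backward
      intro hg f k hf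
      have h1 : HasSum (fun n => ⟪g, ((β n : ℂ) * ⟪ψ n, f⟫) • ψ n⟫) ⟪g, k⟫ :=
        hf.mapL (innerSL ℂ g)
      have h2 : HasSum (fun n => ⟪f, ((β n : ℂ) * ⟪ψ n, g⟫) • ψ n⟫) ⟪f, h⟫ :=
        hg.mapL (innerSL ℂ f)
      have h3 := h2.map (starRingEnd ℂ) (by continuity)
      rw [inner_conj_symm] at h3
      refine h1.unique (h3.congr_fun fun n => ?_)
      simp only [Function.comp_apply, inner_smul_right, map_mul, inner_conj_symm,
        Complex.conj_ofReal]
      ring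
  · -- positivity
    intro hβ f k hf
    have h1 : HasSum (fun n => ⟪f, ((β n : ℂ) * ⟪ψ n, f⟫) • ψ n⟫) ⟪f, k⟫ :=
      hf.mapL (innerSL ℂ f)
    have hterm : ∀ n, ⟪f, ((β n : ℂ) * ⟪ψ n, f⟫) • ψ n⟫
        = ((β n * Complex.normSq ⟪ψ n, f⟫ : ℝ) : ℂ) := by
      intro n
      rw [inner_smul_right]
      have : ⟪f, ψ n⟫ = (starRingEnd ℂ) ⟪ψ n, f⟫ := (inner_conj_symm _ _).symm
      rw [this]
      push_cast
      rw [← Complex.mul_conj]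
      ring
    have h2 : HasSum (fun n => ((β n * Complex.normSq ⟪ψ n, f⟫ : ℝ) : ℂ)) ⟪f, k⟫ :=
      h1.congr_fun fun n => (hterm n).symm ▸ rfl
    have hre := h2.mapL Complex.reCLM
    have him := h2.mapL Complex.imCLM
    simp only [Complex.reCLM_apply, Complex.imCLM_apply, Complex.ofReal_re,
      Complex.ofReal_im] at hre him
    constructor
    · exact hasSum_le (fun n => mul_nonneg (hβ n) (Complex.normSq_nonneg _)) hasSum_zero hre
    · exact him.unique hasSum_zero
end
end

section
/- With S_ψ f = Σ_n ⟨f, ψ_n⟩ ψ_n (bounded) and the unbounded operators H_{φ,ψ}^α, H_{ψ,φ}^α, S_ψ^α as defined via the Riesz bases, one has the exact operator equalities (including equality of domains): S_ψ H_{φ,ψ}^α = H_{ψ,φ}^α S_ψ = S_ψ^α. -/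
noncomputable section

open ContinuousLinearMap

local notation "⟪" x ", " y "⟫" => @inner ℂ _ _ x y

theorem intertwining_S_psi
    {H : Type*} [NormedAddCommGroup H] [InnerProductSpace ℂ H] [CompleteSpace H]
    (e : HilbertBasis ℕ ℂ H) (T : H ≃L[ℂ] H) (φ ψ : ℕ → H)
    (hφ : ∀ n, φ n = T (e n))
    (hψ : ∀ n, ψ n = adjoint (T.symm : H →L[ℂ] H) (e n)) (α : ℕ → ℂ)
    (Sψ : H →L[ℂ] H) (hSψ : ∀ f, HasSum (fun n => ⟪ψ n, f⟫ • ψ n) (Sψ f)) :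
    ∀ f : H,
      ((Summable fun n => (α n * ⟪ψ n, f⟫) • φ n) ↔
        (Summable fun n => (α n * ⟪φ n, Sψ f⟫) • ψ n)) ∧
      ((Summable fun n => (α n * ⟪ψ n, f⟫) • φ n) ↔
        (Summable fun n => (α n * ⟪ψ n, f⟫) • ψ n)) ∧
      (∀ g : H, HasSum (fun n => (α n * ⟪ψ n, f⟫) • φ n) g →
        HasSum (fun n => (α n * ⟪φ n, Sψ f⟫) • ψ n) (Sψ g) ∧
        HasSum (fun n => (α n * ⟪ψ n, f⟫) • ψ n) (Sψ g)) := by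
  intro f
  set Ts : H →L[ℂ] H := (T.symm : H →L[ℂ] H) with hTs
  set Tc : H →L[ℂ] H := (T : H →L[ℂ] H) with hTc
  set B : H →L[ℂ] H := adjoint Ts with hB
  -- adjoint T ∘ B = id and B ∘ adjoint T = id
  have h1 : Ts.comp Tc = ContinuousLinearMap.id ℂ H := by
    ext x; simp [Ts, Tc]
  have h2 : Tc.comp Ts = ContinuousLinearMap.id ℂ H := by
    ext x; simp [Ts, Tc]
  have hBT : ∀ x, adjoint Tc (B x) = x := by
    intro x
    have h3 : adjoint Tc ∘L B = ContinuousLinearMap.id ℂ H := by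
      rw [hB, ← adjoint_comp, h1, adjoint_id]
    exact DFunLike.congr_fun h3 x
  have hTB : ∀ x, B (adjoint Tc x) = x := by
    intro x
    have h3 : B ∘L adjoint Tc = ContinuousLinearMap.id ℂ H := by
      rw [hB, ← adjoint_comp, h2, adjoint_id]
    exact DFunLike.congr_fun h3 x
  -- Sψ x = B (Ts x)
  have hSf : ∀ x, Sψ x = B (Ts x) := by
    intro x
    have h0 : HasSum (fun n => ⟪e n, Ts x⟫ • e n) (Ts x) := by
      simpa [e.repr_apply_apply] using e.hasSum_repr (Ts x)
    have h1' : HasSum (fun n => ⟪ψ n, x⟫ • ψ n) (B (Ts x)) := by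
      have := h0.mapL B
      convert this using 2 with n
      rw [hψ, map_smul]
      congr 1
      simp [hB, adjoint_inner_left]
    exact (hSψ x).unique h1'
  -- coefficient identity
  have hcoef : ∀ n, ⟪φ n, Sψ f⟫ = ⟪ψ n, f⟫ := by
    intro n
    rw [hSf, hφ, hψ, hB, adjoint_inner_right, adjoint_inner_left]
    have : Ts (T (e n)) = e n := by simp [Ts]
    rw [this]
  -- the two transfer maps
  have hfwd : ∀ g, HasSum (fun n => (α n * ⟪ψ n, f⟫) • φ n) g →
      HasSum (fun n => (α n * ⟪ψ n, f⟫) • ψ n) (Sψ g) := by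
    intro g hg
    have := hg.mapL (B ∘L Ts)
    simp only [ContinuousLinearMap.comp_apply] at this
    rw [← hSf] at this
    convert this using 2 with n
    rw [hφ, hψ, map_smul, map_smul]
    congr 1
    simp [Ts]
  have hbwd : ∀ g, HasSum (fun n => (α n * ⟪ψ n, f⟫) • ψ n) g →
      HasSum (fun n => (α n * ⟪ψ n, f⟫) • φ n) ((Tc ∘L adjoint Tc) g) := by
    intro g hg
    have := hg.mapL (Tc ∘L adjoint Tc)
    convert this using 2 with n
    rw [hφ, map_smul]
    congr 1
    simp only [ContinuousLinearMap.comp_apply]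
    rw [hψ, hBT]
    simp [Tc]
  have hiff : (Summable fun n => (α n * ⟪ψ n, f⟫) • φ n) ↔
      (Summable fun n => (α n * ⟪ψ n, f⟫) • ψ n) := by
    constructor
    · intro h
      exact ⟨_, hfwd _ h.hasSum⟩
    · intro h
      exact ⟨_, hbwd _ h.hasSum⟩
  refine ⟨?_, hiff, ?_⟩
  · simp only [hcoef]
    exact hiff
  · intro g hg
    have h := hfwd g hg
    simp only [hcoef]
    exact ⟨h, h⟩
end
end

section
/- With S_φ f = Σ_n ⟨f, φ_n⟩ φ_n, one has the exact operator equalities S_φ H_{ψ,φ}^α = H_{φ,ψ}^α S_φ = S_φ^α, where S_φ^α f = Σ_n α_n ⟨f, φ_n⟩ φ_n on its natural domain. -/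
noncomputable section

open ContinuousLinearMap

local notation "⟪" x ", " y "⟫" => @inner ℂ _ _ x y

/-! Expanding `T† f` in the basis `e` shows `S_φ = T T†`. Hence `S_φ ψ_n = T T† (T†)⁻¹ e_n = φ_n`
and `⟪ψ_n, S_φ f⟫ = ⟪e_n, T† f⟫ = ⟪φ_n, f⟫`, so applying `S_φ` to the series of `H_{ψ,φ}^α f` gives
both other series term by term. Summability transfers because `c ↦ Σ c_n ψ_n` and `c ↦ Σ c_n φ_n`
are the images of `c ↦ Σ c_n e_n` under the isomorphisms `(T†)⁻¹` and `T`. -/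

section

variable {𝕜 E F : Type*} [RCLike 𝕜]
  [NormedAddCommGroup E] [InnerProductSpace 𝕜 E] [CompleteSpace E]
  [NormedAddCommGroup F] [InnerProductSpace 𝕜 F] [CompleteSpace F]

theorem HilbertBasis.hasSum_inner_map_smul_map {ι : Type*} (b : HilbertBasis ι 𝕜 E)
    (A : E →L[𝕜] F) (x : F) :
    HasSum (fun i => inner 𝕜 (A (b i)) x • A (b i)) (A (adjoint A x)) := by
  simpa [b.repr_apply_apply, adjoint_inner_right] using (b.hasSum_repr (adjoint A x)).mapL A

def ContinuousLinearEquiv.adjoint (T : E ≃L[𝕜] F) : F ≃L[𝕜] E :=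
  ContinuousLinearEquiv.equivOfInverse (ContinuousLinearMap.adjoint (T : E →L[𝕜] F))
    (ContinuousLinearMap.adjoint (T.symm : F →L[𝕜] E))
    (fun x => ext_inner_right 𝕜 fun y => by simp [adjoint_inner_left])
    (fun x => ext_inner_right 𝕜 fun y => by simp [adjoint_inner_left])

@[simp]
theorem ContinuousLinearEquiv.adjoint_apply (T : E ≃L[𝕜] F) (x : F) :
    T.adjoint x = ContinuousLinearMap.adjoint (T : E →L[𝕜] F) x :=
  rfl

@[simp]
theorem ContinuousLinearEquiv.adjoint_symm_apply (T : E ≃L[𝕜] F) (x : E) :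
    T.adjoint.symm x = ContinuousLinearMap.adjoint (T.symm : F →L[𝕜] E) x :=
  rfl

end

theorem ContinuousLinearEquiv.summable_smul_map_iff {ι R M M₂ : Type*} [Semiring R]
    [AddCommMonoid M] [Module R M] [TopologicalSpace M]
    [AddCommMonoid M₂] [Module R M₂] [TopologicalSpace M₂]
    (L : M ≃L[R] M₂) (c : ι → R) (v : ι → M) :
    (Summable fun i => c i • L (v i)) ↔ Summable fun i => c i • v i := by
  simp only [← map_smul, L.summable]

theorem intertwining_S_phi
    {H : Type*} [NormedAddCommGroup H] [InnerProductSpace ℂ H] [CompleteSpace H]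
    (e : HilbertBasis ℕ ℂ H) (T : H ≃L[ℂ] H) (φ ψ : ℕ → H)
    (hφ : ∀ n, φ n = T (e n))
    (hψ : ∀ n, ψ n = adjoint (T.symm : H →L[ℂ] H) (e n)) (α : ℕ → ℂ)
    (Sφ : H →L[ℂ] H) (hSφ : ∀ f, HasSum (fun n => ⟪φ n, f⟫ • φ n) (Sφ f)) :
    ∀ f : H,
      ((Summable fun n => (α n * ⟪φ n, f⟫) • ψ n) ↔
        (Summable fun n => (α n * ⟪ψ n, Sφ f⟫) • φ n)) ∧
      ((Summable fun n => (α n * ⟪φ n, f⟫) • ψ n) ↔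
        (Summable fun n => (α n * ⟪φ n, f⟫) • φ n)) ∧
      (∀ g : H, HasSum (fun n => (α n * ⟪φ n, f⟫) • ψ n) g →
        HasSum (fun n => (α n * ⟪ψ n, Sφ f⟫) • φ n) (Sφ g) ∧
        HasSum (fun n => (α n * ⟪φ n, f⟫) • φ n) (Sφ g)) := by
  intro f
  have hψ' : ∀ n, ψ n = T.adjoint.symm (e n) := hψ
  have hS : ∀ x, Sφ x = T (T.adjoint x) := fun x =>
    (hSφ x).unique (by
      simpa only [hφ, T.adjoint_apply, ContinuousLinearEquiv.coe_coe] using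
        e.hasSum_inner_map_smul_map (T : H →L[ℂ] H) x)
  have hSψ : ∀ n, Sφ (ψ n) = φ n := by
    simp only [hS, hψ', ContinuousLinearEquiv.apply_symm_apply, hφ, implies_true]
  have hcoef : ∀ n, ⟪ψ n, Sφ f⟫ = ⟪φ n, f⟫ := by
    simp [hψ, hS, hφ, adjoint_inner_left, adjoint_inner_right]
  have hsum : ∀ c : ℕ → ℂ, (Summable fun n => c n • ψ n) ↔ Summable fun n => c n • φ n := by
    simp only [hψ', hφ, ContinuousLinearEquiv.summable_smul_map_iff, implies_true]
  refine ⟨by simpa only [hcoef] using hsum _, hsum _, fun g hg => ?_⟩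
  have hφg : HasSum (fun n => (α n * ⟪φ n, f⟫) • φ n) (Sφ g) := by
    simpa only [map_smul, hSψ] using hg.mapL Sφ
  exact ⟨by simpa only [hcoef] using hφg, hφg⟩
end
end

section
/- Define lowering and raising operators A^γ f = Σ_{n≥1} γ_n ⟨f, ψ_n⟩ φ_{n-1} and B^γ f = Σ_{n≥0} γ_{n+1} ⟨f, ψ_n⟩ φ_{n+1} on their natural domains. Then (A^γ)* = B^{γ̄}_{ψ,φ}, where B^{γ̄}_{ψ,φ} f = Σ_{n≥0} \overline{γ_{n+1}} ⟨f, φ_n⟩ ψ_{n+1}. -/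
noncomputable section

open ContinuousLinearMap

local notation "⟪" x ", " y "⟫" => @inner ℂ _ _ x y

theorem adjoint_of_lowering
    {H : Type*} [NormedAddCommGroup H] [InnerProductSpace ℂ H] [CompleteSpace H]
    (e : HilbertBasis ℕ ℂ H) (T : H ≃L[ℂ] H) (φ ψ : ℕ → H)
    (hφ : ∀ n, φ n = T (e n))
    (hψ : ∀ n, ψ n = adjoint (T.symm : H →L[ℂ] H) (e n)) (γ : ℕ → ℂ) :
    ∀ g h : H,
      (∀ f k : H, HasSum (fun n => (γ (n + 1) * ⟪ψ (n + 1), f⟫) • φ n) k → ⟪g, k⟫ = ⟪h, f⟫) ↔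
        HasSum (fun n => ((starRingEnd ℂ) (γ (n + 1)) * ⟪φ n, g⟫) • ψ (n + 1)) h := by
  intro g h
  have hψ_inner : ∀ (m : ℕ) (f : H), ⟪ψ m, f⟫ = ⟪e m, T.symm f⟫ := by
    intro m f; rw [hψ]; exact adjoint_inner_left _ _ _
  have honb : ∀ i j : ℕ, ⟪e i, e j⟫ = if i = j then (1 : ℂ) else 0 :=
    orthonormal_iff_ite.mp e.orthonormal
  constructor
  · intro Hyp
    -- coefficients of T* h
    let c : ℕ → ℂ := fun n => ⟪e n, adjoint (T : H →L[ℂ] H) h⟫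
    have hc0 : c 0 = 0 := by
      have h0 : HasSum (fun n => (γ (n + 1) * ⟪ψ (n + 1), T (e 0)⟫) • φ n) 0 := by
        have : (fun n => (γ (n + 1) * ⟪ψ (n + 1), T (e 0)⟫) • φ n) = fun _ => (0 : H) := by
          funext n
          rw [hψ_inner, T.symm_apply_apply, honb]
          simp
        rw [this]; exact hasSum_zero
      have := Hyp (T (e 0)) 0 h0
      simp only [inner_zero_right] at this
      have h3 : ⟪T (e 0), h⟫ = 0 := by
        rw [← inner_conj_symm, ← this]; simp
      show ⟪e 0, adjoint (T : H →L[ℂ] H) h⟫ = 0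
      rw [adjoint_inner_right]
      exact h3
    have hcs : ∀ m : ℕ, c (m + 1) = (starRingEnd ℂ) (γ (m + 1)) * ⟪φ m, g⟫ := by
      intro m
      have h0 : HasSum (fun n => (γ (n + 1) * ⟪ψ (n + 1), T (e (m + 1))⟫) • φ n)
          ((γ (m + 1)) • φ m) := by
        have heq : (fun n => (γ (n + 1) * ⟪ψ (n + 1), T (e (m + 1))⟫) • φ n)
            = fun n => if n = m then (γ (m + 1)) • φ m else 0 := by
          funext n
          rw [hψ_inner, T.symm_apply_apply, honb]
          by_cases hnm : n = m
          · subst hnm; simp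
          · have : ¬ (n + 1 = m + 1) := by omega
            simp [hnm, this]
        rw [heq]
        exact hasSum_ite_eq m _
      have := Hyp (T (e (m + 1))) _ h0
      rw [inner_smul_right] at this
      have h2 : ⟪T (e (m + 1)), h⟫ = (starRingEnd ℂ) (γ (m + 1) * ⟪g, φ m⟫) := by
        rw [← inner_conj_symm, ← this]
      show ⟪e (m + 1), adjoint (T : H →L[ℂ] H) h⟫ = (starRingEnd ℂ) (γ (m + 1)) * ⟪φ m, g⟫
      rw [adjoint_inner_right]
      have h4 : ⟪(T : H →L[ℂ] H) (e (m + 1)), h⟫ = (starRingEnd ℂ) (γ (m + 1) * ⟪g, φ m⟫) := h2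
      rw [h4]
      simp [mul_comm, inner_conj_symm]
    -- expansion of T* h
    have hrepr : HasSum (fun n => c n • e n) (adjoint (T : H →L[ℂ] H) h) := by
      have := e.hasSum_repr (adjoint (T : H →L[ℂ] H) h)
      simpa [c, e.repr_apply_apply] using this
    -- shift index
    have hshift : HasSum (fun n => c (n + 1) • e (n + 1)) (adjoint (T : H →L[ℂ] H) h) := by
      have hinj : Function.Injective (fun n : ℕ => n + 1) := fun a b hab => by simpa using hab
      have hsupp : ∀ x ∉ Set.range (fun n : ℕ => n + 1), c x • e x = 0 := by
        intro x hx
        have hx0 : x = 0 := by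
          by_contra hne
          exact hx ⟨x - 1, by simp; omega⟩
        rw [hx0, hc0, zero_smul]
      exact (Function.Injective.hasSum_iff hinj hsupp).mpr hrepr
    -- apply (T⁻¹)*
    have hmap := (adjoint (T.symm : H →L[ℂ] H)).hasSum hshift
    have hid : adjoint (T.symm : H →L[ℂ] H) (adjoint (T : H →L[ℂ] H) h) = h := by
      apply ext_inner_left ℂ
      intro y
      rw [adjoint_inner_right, adjoint_inner_right]
      congr 1
      exact T.apply_symm_apply y
    rw [hid] at hmap
    have : (fun n => adjoint (T.symm : H →L[ℂ] H) (c (n + 1) • e (n + 1)))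
        = fun n => ((starRingEnd ℂ) (γ (n + 1)) * ⟪φ n, g⟫) • ψ (n + 1) := by
      funext n
      rw [map_smul, hcs n, ← hψ]
    rwa [this] at hmap
  · intro Hh f k hk
    have h1 : HasSum (fun n => γ (n + 1) * ⟪ψ (n + 1), f⟫ * ⟪g, φ n⟫) ⟪g, k⟫ := by
      have := (innerSL ℂ g).hasSum hk
      simpa [innerSL_apply_apply, inner_smul_right, mul_comm, mul_assoc, mul_left_comm] using this
    have h2 : HasSum (fun n => (starRingEnd ℂ) (γ (n + 1)) * ⟪φ n, g⟫ * ⟪f, ψ (n + 1)⟫)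
        ⟪f, h⟫ := by
      have := (innerSL ℂ f).hasSum Hh
      simpa [innerSL_apply_apply, inner_smul_right, mul_comm, mul_assoc, mul_left_comm] using this
    have h3 : HasSum (fun n => γ (n + 1) * ⟪ψ (n + 1), f⟫ * ⟪g, φ n⟫) ⟪h, f⟫ := by
      have := h2.star
      simp only [star_mul', RCLike.star_def, starRingEnd_self_apply, inner_conj_symm] at this
      convert this using 2 with n
      ring
    exact h1.unique h3
end
end
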